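/- Let m and n be integers with n ≥ 2 and m − n ≥ 3. Then for every q with 1 ≤ q ≤ n and every i with 1 ≤ i ≤ m−1, the graph distance in the generalized Möbius ladder M_{m,n} satisfies d(v_{1,n}, v_{i,q}) = d(v_{1,1}, v_{i,n+1−q}). -/
import Mathlib


/-- The relation generating the edges of the generalized Möbius ladder `M_{m,n}`:
horizontal edges `{(i,j),(i+1,j)}`, vertical edges `{(i,j),(i,j+1)}`, and the
twisted edges `{(m-1,j),(1,n+1-j)}`. -/
def gmlRel (m n : ℕ) (u v : ℕ × ℕ) : Prop :=
  (u.2 = v.2 ∧ v.1 = u.1 + 1) ∨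
  (u.1 = v.1 ∧ v.2 = u.2 + 1) ∨
  (u.1 = m - 1 ∧ v.1 = 1 ∧ u.2 + v.2 = n + 1)

/-- The vertex set `{(i,j) : 1 ≤ i ≤ m-1, 1 ≤ j ≤ n}` of `M_{m,n}`. -/
abbrev GMLVert (m n : ℕ) : Type :=
  {p : ℕ × ℕ // 1 ≤ p.1 ∧ p.1 ≤ m - 1 ∧ 1 ≤ p.2 ∧ p.2 ≤ n}

/-- The generalized Möbius ladder `M_{m,n}` as a simple graph. -/
def GML (m n : ℕ) : SimpleGraph (GMLVert m n) :=
  SimpleGraph.fromRel (fun u v => gmlRel m n u.val v.val)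

/-- `W` is a resolving set of `M_{m,n}`: distinct vertices have distinct
tuples of distances to the elements of `W`. -/
def IsResolving (m n : ℕ) (W : Set (GMLVert m n)) : Prop :=
  ∀ u v : GMLVert m n,
    (∀ w ∈ W, (GML m n).dist u w = (GML m n).dist v w) → u = v

/-- The metric dimension of `M_{m,n}`: the minimum cardinality of a resolving set. -/
noncomputable def metricDim (m n : ℕ) : ℕ :=
  sInf {k : ℕ | ∃ W : Finset (GMLVert m n), W.card = k ∧ IsResolving m n ↑W}

/-- The vertical flip `(i,j) ↦ (i, n+1-j)` as an equivalence on the vertex set. -/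
def gmlFlip (m n : ℕ) : GMLVert m n ≃ GMLVert m n where
  toFun p := ⟨(p.val.1, n + 1 - p.val.2), by
    obtain ⟨h1, h2, h3, h4⟩ := p.property; exact ⟨h1, h2, by omega, by omega⟩⟩
  invFun p := ⟨(p.val.1, n + 1 - p.val.2), by
    obtain ⟨h1, h2, h3, h4⟩ := p.property; exact ⟨h1, h2, by omega, by omega⟩⟩
  left_inv p := by
    obtain ⟨⟨a, b⟩, h⟩ := p
    have hb : 1 ≤ b ∧ b ≤ n := ⟨h.2.2.1, h.2.2.2⟩
    apply Subtype.ext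
    simp only [Prod.mk.injEq, true_and]
    omega
  right_inv p := by
    obtain ⟨⟨a, b⟩, h⟩ := p
    have hb : 1 ≤ b ∧ b ≤ n := ⟨h.2.2.1, h.2.2.2⟩
    apply Subtype.ext
    simp only [Prod.mk.injEq, true_and]
    omega

/-- Transferring the symmetrized edge relation along the vertical flip. -/
lemma gml_aux {n m' a c b d b' d' : ℕ} (hbb : b + b' = n + 1) (hdd : d + d' = n + 1)
    (h : (b' = d' ∧ c = a + 1 ∨ a = c ∧ d' = b' + 1 ∨ a = m' ∧ c = 1 ∧ b' + d' = n + 1) ∨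
      d' = b' ∧ a = c + 1 ∨ c = a ∧ b' = d' + 1 ∨ c = m' ∧ a = 1 ∧ d' + b' = n + 1) :
    (b = d ∧ c = a + 1 ∨ a = c ∧ d = b + 1 ∨ a = m' ∧ c = 1 ∧ b + d = n + 1) ∨
      d = b ∧ a = c + 1 ∨ c = a ∧ b = d + 1 ∨ c = m' ∧ a = 1 ∧ d + b = n + 1 := by
  rcases h with (⟨h1, h2⟩ | ⟨h1, h2⟩ | ⟨h1, h2, h3⟩) | (⟨h1, h2⟩ | ⟨h1, h2⟩ | ⟨h1, h2, h3⟩)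
  · exact Or.inl (Or.inl ⟨by omega, h2⟩)
  · exact Or.inr (Or.inr (Or.inl ⟨h1.symm, by omega⟩))
  · exact Or.inl (Or.inr (Or.inr ⟨h1, h2, by omega⟩))
  · exact Or.inr (Or.inl ⟨by omega, h2⟩)
  · exact Or.inl (Or.inr (Or.inl ⟨h1.symm, by omega⟩))
  · exact Or.inr (Or.inr (Or.inr ⟨h1, h2, by omega⟩))

/-- The vertical flip is a graph automorphism of `M_{m,n}`. -/
def gmlFlipIso (m n : ℕ) : GML m n ≃g GML m n where
  toEquiv := gmlFlip m n
  map_rel_iff' := by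
    intro u v
    obtain ⟨⟨a, b⟩, ha⟩ := u
    obtain ⟨⟨c, d⟩, hc⟩ := v
    have hb : 1 ≤ b ∧ b ≤ n := ⟨ha.2.2.1, ha.2.2.2⟩
    have hd : 1 ≤ d ∧ d ≤ n := ⟨hc.2.2.1, hc.2.2.2⟩
    simp only [GML, SimpleGraph.fromRel_adj, gmlFlip, gmlRel, Equiv.coe_fn_mk, ne_eq,
      Subtype.mk.injEq, Prod.mk.injEq]
    have hbb : b + (n + 1 - b) = n + 1 := by omega
    have hdd : d + (n + 1 - d) = n + 1 := by omega
    generalize hB : n + 1 - b = b' at *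
    generalize hD : n + 1 - d = d' at *
    generalize hM : m - 1 = m' at *
    constructor
    · rintro ⟨hne, h⟩
      exact ⟨fun hh => hne ⟨hh.1, by omega⟩, gml_aux hbb hdd h⟩
    · rintro ⟨hne, h⟩
      refine ⟨fun hh => hne ⟨hh.1, by omega⟩, ?_⟩
      exact gml_aux (b := b') (b' := b) (d := d') (d' := d) (by omega) (by omega) h
  
lemma dist_map_le {V W : Type*} {G : SimpleGraph V} {H : SimpleGraph W} (f : G →g H)
    {u v : V} (h : G.Reachable u v) : H.dist (f u) (f v) ≤ G.dist u v := by
  obtain ⟨p, hp⟩ := h.exists_walk_length_eq_dist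
  calc H.dist (f u) (f v) ≤ (p.map f).length := SimpleGraph.dist_le _
    _ = G.dist u v := by rw [SimpleGraph.Walk.length_map, hp]

lemma iso_dist_eq {V W : Type*} {G : SimpleGraph V} {H : SimpleGraph W} (φ : G ≃g H)
    (u v : V) : H.dist (φ u) (φ v) = G.dist u v := by
  by_cases h : G.Reachable u v
  · refine le_antisymm (dist_map_le φ.toHom h) ?_
    have := dist_map_le φ.symm.toHom (h.map φ.toHom)
    simpa using this
  · rw [SimpleGraph.dist_eq_zero_of_not_reachable h,
      SimpleGraph.dist_eq_zero_of_not_reachable (fun hr => h ?_)]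
    have := hr.map φ.symm.toHom
    simpa using this

theorem stmt5 (m n : ℕ) (hn : 2 ≤ n) (hm : n + 3 ≤ m)
    (q i : ℕ) (hq1 : 1 ≤ q) (hq2 : q ≤ n) (hi1 : 1 ≤ i) (hi2 : i ≤ m - 1) :
    (GML m n).dist ⟨(1, n), by omega⟩ ⟨(i, q), by omega⟩ =
      (GML m n).dist ⟨(1, 1), by omega⟩ ⟨(i, n + 1 - q), by omega⟩ := by
  have key := iso_dist_eq (gmlFlipIso m n) ⟨(1, n), by omega⟩ ⟨(i, q), by omega⟩
  rw [← key]
  congr 1 <;> apply Subtype.ext <;>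
    simp only [gmlFlipIso, gmlFlip, RelIso.coe_fn_mk, Equiv.coe_fn_mk, Prod.mk.injEq] <;>
    exact ⟨trivial, by omega⟩
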